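/- arXiv:1301.4779 — 4 statements merged into one kernel-verified Lean document; each statement's English description precedes it below -/
import Mathlib

section
/- The 0-1 principle: if a comparator network (a sorting network candidate given by a fixed sequence of compare-and-swap operations on positions) sorts every input sequence whose elements are drawn from {0,1}, then it sorts every input sequence over any linearly ordered type. -/
/-- Apply one comparator `(i,j)`: put `min` at `i` and `max` at `j`. -/
def applyComp {n : ℕ} {α : Type*} [LinearOrder α]
    (v : Fin n → α) (c : Fin n × Fin n) : Fin n → α :=
  fun k =>
    if k = c.1 then min (v c.1) (v c.2)
    else if k = c.2 then max (v c.1) (v c.2)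
    else v k

/-- Run a comparator network (a list of comparators, in order). -/
def runNet {n : ℕ} {α : Type*} [LinearOrder α]
    (N : List (Fin n × Fin n)) (v : Fin n → α) : Fin n → α :=
  N.foldl applyComp v

lemma applyComp_map {n : ℕ} {α β : Type*} [LinearOrder α] [LinearOrder β]
    {f : α → β} (hf : Monotone f) (v : Fin n → α) (c : Fin n × Fin n) :
    (fun k => f (applyComp v c k)) = applyComp (fun k => f (v k)) c := by
  funext k
  unfold applyComp
  split_ifs <;> simp [hf.map_min, hf.map_max]

lemma runNet_map {n : ℕ} {α β : Type*} [LinearOrder α] [LinearOrder β]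
    {f : α → β} (hf : Monotone f) (N : List (Fin n × Fin n)) (v : Fin n → α) :
    (fun k => f (runNet N v k)) = runNet N (fun k => f (v k)) := by
  induction N generalizing v with
  | nil => rfl
  | cons c N ih =>
    simp only [runNet, List.foldl_cons] at *
    rw [ih (applyComp v c), applyComp_map hf]

/-- The 0-1 principle. -/
theorem zero_one_principle {n : ℕ} (N : List (Fin n × Fin n))
    (hwf : ∀ c ∈ N, c.1 < c.2)
    (h01 : ∀ v : Fin n → Bool, Monotone (runNet N v)) :
    ∀ (α : Type*) [LinearOrder α], ∀ v : Fin n → α, Monotone (runNet N v) := by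
  intro α _ v i j hij
  by_contra hlt
  push_neg at hlt
  set w := runNet N v with hw
  set f : α → Bool := fun x => decide (w j < x) with hfdef
  have hf : Monotone f := by
    intro a b hab
    simp only [hfdef]
    by_cases h : w j < a
    · simp [h, lt_of_lt_of_le h hab]
    · simp [h]
  have key := runNet_map hf N v
  have := h01 (fun k => f (v k)) hij
  rw [← key] at this
  simp only [← hw, hfdef] at this
  rw [decide_eq_true hlt] at this
  simp at this
  exact absurd this (by decide)
end

section
/- For any order-preserving (monotone) function f and any comparator network N, applying N to the image of a vector under f equals the image under f of applying N to the vector; i.e., comparator networks commute with monotone maps. -/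
/-- Comparator networks commute with monotone maps between linear orders. -/
theorem runNet_comm_monotone {n : ℕ} {α β : Type*} [LinearOrder α] [LinearOrder β]
    (N : List (Fin n × Fin n)) (hwf : ∀ c ∈ N, c.1 < c.2)
    (f : α → β) (hf : Monotone f) (v : Fin n → α) :
    runNet N (f ∘ v) = f ∘ runNet N v := by
  induction N generalizing v with
  | nil => rfl
  | cons c N ih =>
    simp only [runNet, List.foldl_cons] at *
    have hstep : applyComp (f ∘ v) c = f ∘ applyComp v c := by
      funext k
      simp only [applyComp, Function.comp_apply]
      split_ifs <;> simp [hf.map_min, hf.map_max]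
    rw [hstep]
    exact ih (fun d hd => hwf d (List.mem_cons_of_mem c hd)) _
end

section
/- Bitonic merger correctness: the recursive merger, which applies min_max_swap to a bitonic 0-1 sequence of length 2^n and recursively merges the two halves, produces a sorted (nondecreasing) sequence. -/
/-- Complete binary trees of depth `n`. -/
inductive BTree (A : Type*) : ℕ → Type _
  | L : A → BTree A 0
  | N : {n : ℕ} → BTree A n → BTree A n → BTree A (n + 1)

/-- The list of leaves of a complete binary tree, left to right. -/
def BTree.leaves {A : Type*} : {n : ℕ} → BTree A n → List A
  | _, .L x => [x]
  | _, .N l r => l.leaves ++ r.leaves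

/-- Componentwise compare-and-swap of two sequences represented as trees:
mins go to the first result, maxes to the second. -/
def minMaxSwap {α : Type*} [LinearOrder α] :
    {n : ℕ} → BTree α n → BTree α n → BTree α n × BTree α n
  | _, .L x, .L y => (.L (min x y), .L (max x y))
  | _, .N l₁ r₁, .N l₂ r₂ =>
    let (a, b) := minMaxSwap l₁ l₂
    let (c, d) := minMaxSwap r₁ r₂
    (.N a c, .N b d)

/-- The recursive bitonic merger. -/
def bmerge {α : Type*} [LinearOrder α] : {n : ℕ} → BTree α n → BTree α n
  | _, .L x => .L x
  | _, .N l r =>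
    let (a, b) := minMaxSwap l r
    .N (bmerge a) (bmerge b)

/-- A list is bitonic if some rotation of it is nondecreasing and then
nonincreasing. -/
def Bitonic {α : Type*} [LinearOrder α] (l : List α) : Prop :=
  ∃ (k : ℕ) (l₁ l₂ : List α),
    l.rotate k = l₁ ++ l₂ ∧ l₁.Pairwise (· ≤ ·) ∧ l₂.Pairwise (· ≥ ·)

namespace BitonicAux

open List

def OnesInt (l : List Bool) : Prop :=
  ∃ a b c, l = replicate a false ++ replicate b true ++ replicate c false

def ZerosInt (l : List Bool) : Prop :=
  ∃ a b c, l = replicate a true ++ replicate b false ++ replicate c true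

def BForm (l : List Bool) : Prop := OnesInt l ∨ ZerosInt l

lemma sorted_le_form {l : List Bool} (h : l.Pairwise (· ≤ ·)) :
    ∃ a b, l = replicate a false ++ replicate b true := by
  induction l with
  | nil => exact ⟨0, 0, rfl⟩
  | cons x xs ih =>
    rw [pairwise_cons] at h
    obtain ⟨a, b, hab⟩ := ih h.2
    cases x with
    | false => exact ⟨a + 1, b, by simp [hab, replicate_succ]⟩
    | true =>
      refine ⟨0, xs.length + 1, ?_⟩
      have hx : ∀ y ∈ xs, y = true := fun y hy => by
        have := h.1 y hy; revert this; cases y <;> simp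
      simpa [replicate_succ] using eq_replicate_of_mem hx

lemma sorted_ge_form {l : List Bool} (h : l.Pairwise (· ≥ ·)) :
    ∃ a b, l = replicate a true ++ replicate b false := by
  induction l with
  | nil => exact ⟨0, 0, rfl⟩
  | cons x xs ih =>
    rw [pairwise_cons] at h
    obtain ⟨a, b, hab⟩ := ih h.2
    cases x with
    | true => exact ⟨a + 1, b, by simp [hab, replicate_succ]⟩
    | false =>
      refine ⟨0, xs.length + 1, ?_⟩
      have hx : ∀ y ∈ xs, y = false := fun y hy => by
        have := h.1 y hy; revert this; cases y <;> simp
      simpa [replicate_succ] using eq_replicate_of_mem hx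

lemma rotate_append_eq {α : Type*} {X Y : List α} {m : ℕ} (h : X.length = m) :
    (X ++ Y).rotate m = Y ++ X := by
  have hm : m ≤ (X ++ Y).length := by simp [← h]
  rw [rotate_eq_drop_append_take hm, drop_left' h, take_left' h]

lemma onesInt_rotate {a b c m : ℕ} (hm : m ≤ a + b + c) :
    BForm ((replicate a false ++ replicate b true ++ replicate c false).rotate m) := by
  by_cases h1 : m ≤ a
  · obtain ⟨a₁, rfl⟩ : ∃ a₁, a = m + a₁ := ⟨a - m, by omega⟩
    rw [show (replicate (m + a₁) false ++ replicate b true ++ replicate c false : List Bool)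
        = replicate m false ++ (replicate a₁ false ++ replicate b true ++ replicate c false) by
        simp only [List.replicate_add, List.append_assoc]]
    rw [rotate_append_eq (by simp)]
    exact Or.inl ⟨a₁, b, c + m, by simp only [List.replicate_add, List.append_assoc]⟩
  · by_cases h2 : m ≤ a + b
    · obtain ⟨b₁, rfl⟩ : ∃ b₁, b = (m - a) + b₁ := ⟨a + b - m, by omega⟩
      rw [show (replicate a false ++ replicate ((m - a) + b₁) true ++ replicate c false : List Bool)
          = (replicate a false ++ replicate (m - a) true)
            ++ (replicate b₁ true ++ replicate c false) by
          simp only [List.replicate_add, List.append_assoc]]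
      rw [rotate_append_eq (by simp; omega)]
      exact Or.inr ⟨b₁, c + a, m - a, by simp only [List.replicate_add, List.append_assoc]⟩
    · obtain ⟨c₁, rfl⟩ : ∃ c₁, c = (m - a - b) + c₁ := ⟨a + b + c - m, by omega⟩
      rw [show (replicate a false ++ replicate b true ++ replicate ((m - a - b) + c₁) false : List Bool)
          = (replicate a false ++ replicate b true ++ replicate (m - a - b) false)
            ++ replicate c₁ false by
          simp only [List.replicate_add, List.append_assoc]]
      rw [rotate_append_eq (by simp; omega)]
      exact Or.inl ⟨c₁ + a, b, m - a - b, by simp only [List.replicate_add, List.append_assoc]⟩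

lemma BForm_of_bitonic {l : List Bool} (h : Bitonic l) : BForm l := by
  obtain ⟨k, l₁, l₂, hrot, h1, h2⟩ := h
  obtain ⟨a, b, rfl⟩ := sorted_le_form h1
  obtain ⟨c, d, rfl⟩ := sorted_ge_form h2
  have hs : l.rotate k
      = replicate a false ++ replicate (b + c) true ++ replicate d false := by
    rw [hrot]; simp only [List.replicate_add, List.append_assoc]
  rw [rotate_eq_iff] at hs
  rw [hs]
  exact onesInt_rotate (le_trans (Nat.sub_le _ _) (by simp; omega))

lemma sorted_FT (x y : ℕ) :
    (replicate x false ++ replicate y true : List Bool).Pairwise (· ≤ ·) := by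
  rw [pairwise_append]
  refine ⟨?_, ?_, ?_⟩
  · exact pairwise_replicate.mpr (Or.inr le_rfl)
  · exact pairwise_replicate.mpr (Or.inr le_rfl)
  · intro p hp q hq
    rw [eq_of_mem_replicate hp, eq_of_mem_replicate hq]
    exact Bool.false_le _

lemma bitonic_of_BForm {l : List Bool} (h : BForm l) : Bitonic l := by
  rcases h with ⟨a, b, c, rfl⟩ | ⟨a, b, c, rfl⟩
  · refine ⟨a + b, replicate (c + a) false ++ replicate b true, [], ?_, sorted_FT _ _,
      Pairwise.nil⟩
    rw [rotate_append_eq (by simp)]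
    simp only [List.replicate_add, List.append_assoc, List.append_nil]
  · refine ⟨a, replicate b false ++ replicate (c + a) true, [], ?_, sorted_FT _ _,
      Pairwise.nil⟩
    rw [append_assoc, rotate_append_eq (by simp)]
    simp only [List.replicate_add, List.append_assoc, List.append_nil]

lemma zipWith_left_const {f : Bool → Bool → Bool} {x z : Bool} (hf : ∀ y, f x y = z)
    {n : ℕ} {ys : List Bool} (h : ys.length = n) :
    zipWith f (replicate n x) ys = replicate n z := by
  induction ys generalizing n with
  | nil => subst h; simp
  | cons y ys ih =>
    subst h
    simp [replicate_succ, hf, ih rfl]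

lemma zipWith_left_id {f : Bool → Bool → Bool} {x : Bool} (hf : ∀ y, f x y = y)
    {n : ℕ} {ys : List Bool} (h : ys.length = n) :
    zipWith f (replicate n x) ys = ys := by
  induction ys generalizing n with
  | nil => subst h; simp
  | cons y ys ih =>
    subst h
    simp [replicate_succ, hf, ih rfl]

lemma zipWith_right_const {f : Bool → Bool → Bool} {x z : Bool} (hf : ∀ y, f y x = z)
    {n : ℕ} {ys : List Bool} (h : ys.length = n) :
    zipWith f ys (replicate n x) = replicate n z := by
  induction ys generalizing n with
  | nil => subst h; simp
  | cons y ys ih =>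
    subst h
    simp [replicate_succ, hf, ih rfl]

lemma zipWith_right_id {f : Bool → Bool → Bool} {x : Bool} (hf : ∀ y, f y x = y)
    {n : ℕ} {ys : List Bool} (h : ys.length = n) :
    zipWith f ys (replicate n x) = ys := by
  induction ys generalizing n with
  | nil => subst h; simp
  | cons y ys ih =>
    subst h
    simp [replicate_succ, hf, ih rfl]

lemma zipWith_blocks (f : Bool → Bool → Bool) (p q r : ℕ) (x₁ x₂ x₃ y₁ y₂ y₃ : Bool) :
    zipWith f (replicate p x₁ ++ replicate q x₂ ++ replicate r x₃)
      (replicate p y₁ ++ replicate q y₂ ++ replicate r y₃) =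
    replicate p (f x₁ y₁) ++ replicate q (f x₂ y₂) ++ replicate r (f x₃ y₃) := by
  rw [zipWith_append (by simp), zipWith_append (by simp)]
  simp [zipWith_replicate]

lemma minB (x y : Bool) : min x y = (x && y) := by cases x <;> cases y <;> rfl
lemma maxB (x y : Bool) : max x y = (x || y) := by cases x <;> cases y <;> rfl

lemma split_lemma {N : ℕ} {l r : List Bool} (hl : l.length = N) (hr : r.length = N)
    (h : BForm (l ++ r)) :
    (zipWith min l r = replicate N false ∧ BForm (zipWith max l r)) ∨
    (BForm (zipWith min l r) ∧ zipWith max l r = replicate N true) := by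
  have minff : ∀ y : Bool, min false y = false := by decide
  have maxff : ∀ y : Bool, max false y = y := by decide
  have minff' : ∀ y : Bool, min y false = false := by decide
  have maxff' : ∀ y : Bool, max y false = y := by decide
  have mintt : ∀ y : Bool, min true y = y := by decide
  have maxtt : ∀ y : Bool, max true y = true := by decide
  have mintt' : ∀ y : Bool, min y true = y := by decide
  have maxtt' : ∀ y : Bool, max y true = true := by decide
  rcases h with ⟨a, b, c, habc⟩ | ⟨a, b, c, habc⟩
  · have hlen : a + b + c = N + N := by
      have := congrArg List.length habc
      simp [hl, hr] at this
      omega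
    by_cases hA : N ≤ a
    · obtain ⟨a₁, rfl⟩ : ∃ a₁, a = N + a₁ := ⟨a - N, by omega⟩
      have key : l ++ r = replicate N false
          ++ (replicate a₁ false ++ replicate b true ++ replicate c false) := by
        rw [habc]; simp only [List.replicate_add, List.append_assoc]
      obtain ⟨rfl, rfl⟩ := append_inj key (by simp [hl])
      refine Or.inl ⟨zipWith_left_const minff hr, Or.inl ⟨a₁, b, c, ?_⟩⟩
      rw [zipWith_left_id maxff hr]
    · by_cases hB : a + b ≤ N
      · obtain ⟨d, rfl, hd⟩ : ∃ d, c = d + N ∧ a + b + d = N := ⟨c - N, by omega, by omega⟩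
        have key : l ++ r = (replicate a false ++ replicate b true ++ replicate d false)
            ++ replicate N false := by
          rw [habc]; simp only [List.replicate_add, List.append_assoc]
        obtain ⟨rfl, rfl⟩ := append_inj key (by simp [hl]; omega)
        refine Or.inl ⟨zipWith_right_const minff' hl, Or.inl ⟨a, b, d, ?_⟩⟩
        rw [zipWith_right_id maxff' hl]
      · by_cases hC : b ≤ N
        · obtain ⟨p, q, r', rfl, rfl, rfl⟩ :
              ∃ p q r', a = p + q ∧ b = r' + p ∧ c = q + r' :=
            ⟨a + b - N, N - b, N - a, by omega, by omega, by omega⟩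
          have hN : p + q + r' = N := by omega
          have key : l ++ r =
              (replicate p false ++ replicate q false ++ replicate r' true)
              ++ (replicate p true ++ replicate q false ++ replicate r' false) := by
            rw [habc]; simp only [List.replicate_add, List.append_assoc]
          obtain ⟨rfl, rfl⟩ := append_inj key (by simp [hl]; omega)
          refine Or.inl ⟨?_, Or.inr ⟨p, q, r', ?_⟩⟩
          · rw [zipWith_blocks]
            rw [← hN]; simp only [List.replicate_add, List.append_assoc, minB, maxB, Bool.and_self, Bool.false_and, Bool.and_false, Bool.true_and, Bool.and_true, Bool.or_self, Bool.false_or, Bool.or_false, Bool.true_or, Bool.or_true]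
          · rw [zipWith_blocks]
            simp [minB, maxB]
        · obtain ⟨y, rfl, hN⟩ : ∃ y, b = (y + c) + (a + y) ∧ a + y + c = N :=
            ⟨b - N, by omega, by omega⟩
          have key : l ++ r =
              (replicate a false ++ replicate y true ++ replicate c true)
              ++ (replicate a true ++ replicate y true ++ replicate c false) := by
            rw [habc]; simp only [List.replicate_add, List.append_assoc]
          obtain ⟨rfl, rfl⟩ := append_inj key (by simp [hl]; omega)
          refine Or.inr ⟨Or.inl ⟨a, y, c, ?_⟩, ?_⟩
          · rw [zipWith_blocks]
            simp [minB, maxB]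
          · rw [zipWith_blocks]
            rw [← hN]; simp only [List.replicate_add, List.append_assoc, minB, maxB, Bool.and_self, Bool.false_and, Bool.and_false, Bool.true_and, Bool.and_true, Bool.or_self, Bool.false_or, Bool.or_false, Bool.true_or, Bool.or_true]
  · have hlen : a + b + c = N + N := by
      have := congrArg List.length habc
      simp [hl, hr] at this
      omega
    by_cases hA : N ≤ a
    · obtain ⟨a₁, rfl⟩ : ∃ a₁, a = N + a₁ := ⟨a - N, by omega⟩
      have key : l ++ r = replicate N true
          ++ (replicate a₁ true ++ replicate b false ++ replicate c true) := by
        rw [habc]; simp only [List.replicate_add, List.append_assoc]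
      obtain ⟨rfl, rfl⟩ := append_inj key (by simp [hl])
      refine Or.inr ⟨Or.inr ⟨a₁, b, c, ?_⟩, zipWith_left_const maxtt hr⟩
      rw [zipWith_left_id mintt hr]
    · by_cases hB : a + b ≤ N
      · obtain ⟨d, rfl, hd⟩ : ∃ d, c = d + N ∧ a + b + d = N := ⟨c - N, by omega, by omega⟩
        have key : l ++ r = (replicate a true ++ replicate b false ++ replicate d true)
            ++ replicate N true := by
          rw [habc]; simp only [List.replicate_add, List.append_assoc]
        obtain ⟨rfl, rfl⟩ := append_inj key (by simp [hl]; omega)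
        refine Or.inr ⟨Or.inr ⟨a, b, d, ?_⟩, zipWith_right_const maxtt' hl⟩
        rw [zipWith_right_id mintt' hl]
      · by_cases hC : b ≤ N
        · obtain ⟨p, q, r', rfl, rfl, rfl⟩ :
              ∃ p q r', a = p + q ∧ b = r' + p ∧ c = q + r' :=
            ⟨a + b - N, N - b, N - a, by omega, by omega, by omega⟩
          have hN : p + q + r' = N := by omega
          have key : l ++ r =
              (replicate p true ++ replicate q true ++ replicate r' false)
              ++ (replicate p false ++ replicate q true ++ replicate r' true) := by
            rw [habc]; simp only [List.replicate_add, List.append_assoc]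
          obtain ⟨rfl, rfl⟩ := append_inj key (by simp [hl]; omega)
          refine Or.inr ⟨Or.inl ⟨p, q, r', ?_⟩, ?_⟩
          · rw [zipWith_blocks]
            simp [minB, maxB]
          · rw [zipWith_blocks]
            rw [← hN]; simp only [List.replicate_add, List.append_assoc, minB, maxB, Bool.and_self, Bool.false_and, Bool.and_false, Bool.true_and, Bool.and_true, Bool.or_self, Bool.false_or, Bool.or_false, Bool.true_or, Bool.or_true]
        · obtain ⟨y, rfl, hN⟩ : ∃ y, b = (y + c) + (a + y) ∧ a + y + c = N :=
            ⟨b - N, by omega, by omega⟩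
          have key : l ++ r =
              (replicate a true ++ replicate y false ++ replicate c false)
              ++ (replicate a false ++ replicate y false ++ replicate c true) := by
            rw [habc]; simp only [List.replicate_add, List.append_assoc]
          obtain ⟨rfl, rfl⟩ := append_inj key (by simp [hl]; omega)
          refine Or.inl ⟨?_, Or.inr ⟨a, y, c, ?_⟩⟩
          · rw [zipWith_blocks]
            rw [← hN]; simp only [List.replicate_add, List.append_assoc, minB, maxB, Bool.and_self, Bool.false_and, Bool.and_false, Bool.true_and, Bool.and_true, Bool.or_self, Bool.false_or, Bool.or_false, Bool.true_or, Bool.or_true]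
          · rw [zipWith_blocks]
            simp [minB, maxB]

lemma leaves_length : ∀ {n : ℕ} (t : BTree Bool n), t.leaves.length = 2 ^ n := by
  intro n
  induction n with
  | zero => intro t; cases t; simp [BTree.leaves]
  | succ n ih =>
    intro t
    cases t with
    | N l r => simp [BTree.leaves, ih l, ih r, pow_succ, mul_two]

lemma minMaxSwap_leaves : ∀ {n : ℕ} (l r : BTree Bool n),
    (minMaxSwap l r).1.leaves = zipWith min l.leaves r.leaves ∧
    (minMaxSwap l r).2.leaves = zipWith max l.leaves r.leaves := by
  intro n
  induction n with
  | zero =>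
    intro l r
    cases l with | L x =>
    cases r with | L y =>
    simp [minMaxSwap, BTree.leaves]
  | succ n ih =>
    intro l r
    cases l with | N l₁ r₁ =>
    cases r with | N l₂ r₂ =>
    obtain ⟨h1, h2⟩ := ih l₁ l₂
    obtain ⟨h3, h4⟩ := ih r₁ r₂
    rcases hab : minMaxSwap l₁ l₂ with ⟨a, b⟩
    rcases hcd : minMaxSwap r₁ r₂ with ⟨c, d⟩
    rw [hab] at h1 h2
    rw [hcd] at h3 h4
    have hz : ∀ f : Bool → Bool → Bool,
        zipWith f (l₁.leaves ++ r₁.leaves) (l₂.leaves ++ r₂.leaves)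
        = zipWith f l₁.leaves l₂.leaves ++ zipWith f r₁.leaves r₂.leaves := fun f =>
      zipWith_append (by rw [leaves_length, leaves_length])
    constructor <;> simp [minMaxSwap, hab, hcd, BTree.leaves, hz, h1, h2, h3, h4]

lemma bmerge_leaves_N {n : ℕ} (l r : BTree Bool n) :
    (bmerge (BTree.N l r)).leaves
      = (bmerge (minMaxSwap l r).1).leaves ++ (bmerge (minMaxSwap l r).2).leaves := by
  rcases hab : minMaxSwap l r with ⟨a, b⟩
  simp [bmerge, hab, BTree.leaves]

lemma bmerge_const : ∀ {n : ℕ} (t : BTree Bool n) (v : Bool),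
    t.leaves = replicate (2 ^ n) v → (bmerge t).leaves = replicate (2 ^ n) v := by
  intro n
  induction n with
  | zero =>
    intro t v h
    cases t
    simpa [bmerge, BTree.leaves] using h
  | succ n ih =>
    intro t v h
    cases t with
    | N l r =>
      have hsp : l.leaves ++ r.leaves = replicate (2 ^ n) v ++ replicate (2 ^ n) v := by
        have h2n : (2 : ℕ) ^ (n + 1) = 2 ^ n + 2 ^ n := by rw [pow_succ, mul_two]
        rw [h2n, List.replicate_add] at h
        exact h
      obtain ⟨hL, hR⟩ := append_inj hsp (by rw [leaves_length]; simp)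
      obtain ⟨h1, h2⟩ := minMaxSwap_leaves l r
      rw [hL, hR] at h1 h2
      have hmin : (minMaxSwap l r).1.leaves = replicate (2 ^ n) v := by
        rw [h1, zipWith_replicate]; simp
      have hmax : (minMaxSwap l r).2.leaves = replicate (2 ^ n) v := by
        rw [h2, zipWith_replicate]; simp
      rw [bmerge_leaves_N, ih _ _ hmin, ih _ _ hmax, ← replicate_add, pow_succ, mul_two]

lemma sorted_replicate (m : ℕ) (x : Bool) :
    (replicate m x : List Bool).Pairwise (· ≤ ·) :=
  pairwise_replicate.mpr (Or.inr le_rfl)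

lemma bmerge_sorted_aux : ∀ (n : ℕ) (t : BTree Bool n), BForm t.leaves →
    (bmerge t).leaves.Pairwise (· ≤ ·) := by
  intro n
  induction n with
  | zero =>
    intro t _
    cases t
    simp [bmerge, BTree.leaves]
  | succ n ih =>
    intro t h
    cases t with
    | N l r =>
      obtain ⟨h1, h2⟩ := minMaxSwap_leaves l r
      have hsp := split_lemma (leaves_length l) (leaves_length r)
        (by simpa [BTree.leaves] using h)
      rw [← h1, ← h2] at hsp
      rw [bmerge_leaves_N]
      rcases hsp with ⟨hmin, hmax⟩ | ⟨hmin, hmax⟩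
      · have hfst : (bmerge (minMaxSwap l r).1).leaves = replicate (2 ^ n) false :=
          bmerge_const _ _ hmin
        have hsnd := ih _ hmax
        rw [pairwise_append]
        refine ⟨hfst ▸ sorted_replicate _ _, hsnd, ?_⟩
        intro p hp q hq
        rw [hfst] at hp
        rw [eq_of_mem_replicate hp]
        exact Bool.false_le _
      · have hsnd : (bmerge (minMaxSwap l r).2).leaves = replicate (2 ^ n) true :=
          bmerge_const _ _ hmax
        have hfst := ih _ hmin
        rw [pairwise_append]
        refine ⟨hfst, hsnd ▸ sorted_replicate _ _, ?_⟩
        intro p hp q hq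
        rw [hsnd] at hq
        rw [eq_of_mem_replicate hq]
        exact Bool.le_true _

end BitonicAux

/-- Bitonic merger correctness on 0-1 sequences: merging a bitonic sequence
of length `2^n` yields a sorted (nondecreasing) sequence. -/
theorem bmerge_sorted {n : ℕ} (t : BTree Bool n) (ht : Bitonic t.leaves) :
    (bmerge t).leaves.Pairwise (· ≤ ·) := by
  exact BitonicAux.bmerge_sorted_aux n t (BitonicAux.BForm_of_bitonic ht)
end

section
/- Bitonic sorter correctness: the recursive bitonic sort, which sorts the left half ascending, the right half descending (by sorting and reversing), concatenates them (yielding a bitonic sequence), and applies the bitonic merger, produces a sorted permutation of its input, for all inputs of length 2^n over a linear order. -/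
/-- Reverse a complete binary tree by recursively swapping subtrees. -/
def BTree.reverse {A : Type*} : {n : ℕ} → BTree A n → BTree A n
  | _, .L x => .L x
  | _, .N l r => .N r.reverse l.reverse

/-- Bitonic sort: sort the left half ascending, the right half descending
(sort then reverse), and merge. -/
def bsort {α : Type*} [LinearOrder α] : {n : ℕ} → BTree α n → BTree α n
  | _, .L x => .L x
  | _, .N l r => bmerge (.N (bsort l) (bsort r).reverse)

section Aux

variable {A B : Type*}

theorem BTree.leaves_length : ∀ {n : ℕ} (t : BTree A n), t.leaves.length = 2 ^ n
  | _, .L x => rfl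
  | _, .N l r => by
    simp [BTree.leaves, BTree.leaves_length l, BTree.leaves_length r, pow_succ]
    ring

theorem BTree.reverse_leaves : ∀ {n : ℕ} (t : BTree A n), t.reverse.leaves = t.leaves.reverse
  | _, .L x => rfl
  | _, .N l r => by
    simp [BTree.reverse, BTree.leaves, BTree.reverse_leaves l, BTree.reverse_leaves r]

variable {α β : Type*} [LinearOrder α] [LinearOrder β]

theorem minMaxSwap_N {n : ℕ} (l₁ r₁ l₂ r₂ : BTree α n) :
    minMaxSwap (.N l₁ r₁) (.N l₂ r₂) =
      (.N (minMaxSwap l₁ l₂).1 (minMaxSwap r₁ r₂).1,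
       .N (minMaxSwap l₁ l₂).2 (minMaxSwap r₁ r₂).2) := by
  rcases h₁ : minMaxSwap l₁ l₂ with ⟨a, b⟩
  rcases h₂ : minMaxSwap r₁ r₂ with ⟨c, d⟩
  simp [minMaxSwap, h₁, h₂]

theorem bmerge_N {n : ℕ} (l r : BTree α n) :
    bmerge (.N l r) = .N (bmerge (minMaxSwap l r).1) (bmerge (minMaxSwap l r).2) := by
  rcases h : minMaxSwap l r with ⟨a, b⟩
  simp [bmerge, h]

theorem minMaxSwap_leaves : ∀ {n : ℕ} (l r : BTree α n),
    (minMaxSwap l r).1.leaves = List.zipWith min l.leaves r.leaves ∧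
    (minMaxSwap l r).2.leaves = List.zipWith max l.leaves r.leaves
  | _, .L x, .L y => by simp [minMaxSwap, BTree.leaves]
  | _, .N l₁ r₁, .N l₂ r₂ => by
    obtain ⟨ha, hb⟩ := minMaxSwap_leaves l₁ l₂
    obtain ⟨hc, hd⟩ := minMaxSwap_leaves r₁ r₂
    rw [minMaxSwap_N]
    constructor <;>
    · simp only [BTree.leaves, ha, hb, hc, hd]
      rw [List.zipWith_append (by rw [BTree.leaves_length, BTree.leaves_length])]

theorem zip_minmax_perm : ∀ (l r : List α), l.length = r.length →
    (List.zipWith min l r ++ List.zipWith max l r).Perm (l ++ r)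
  | [], [], _ => by simp
  | [], _ :: _, h => by simp at h
  | _ :: _, [], h => by simp at h
  | a :: l, b :: r, h => by
    have hlr := zip_minmax_perm l r (by simpa using h)
    simp only [List.zipWith_cons_cons, List.cons_append]
    refine List.Perm.trans (List.Perm.cons _ List.perm_middle) ?_
    refine List.Perm.trans ?_ (List.Perm.cons _ List.perm_middle.symm)
    have h2 : [min a b, max a b].Perm [a, b] := by
      rcases le_total a b with hle | hle
      · rw [min_eq_left hle, max_eq_right hle]
      · rw [min_eq_right hle, max_eq_left hle]
        exact List.Perm.swap _ _ _
    exact List.Perm.append h2 hlr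

theorem bmerge_perm {n : ℕ} (t : BTree α n) : (bmerge t).leaves.Perm t.leaves := by
  induction n with
  | zero => cases t with | L x => simp [bmerge]
  | succ n ih =>
    cases t with
    | N l r =>
      rw [bmerge_N]
      obtain ⟨h1, h2⟩ := minMaxSwap_leaves l r
      show ((bmerge (minMaxSwap l r).1).leaves ++ (bmerge (minMaxSwap l r).2).leaves).Perm _
      refine ((List.Perm.append (ih _) (ih _)).trans ?_)
      rw [h1, h2]
      exact zip_minmax_perm _ _ (by rw [BTree.leaves_length, BTree.leaves_length])

theorem bsort_perm {n : ℕ} (t : BTree α n) : (bsort t).leaves.Perm t.leaves := by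
  induction n with
  | zero => cases t with | L x => simp [bsort]
  | succ n ih =>
    cases t with
    | N l r =>
      show (bmerge (.N (bsort l) (bsort r).reverse)).leaves.Perm _
      refine (bmerge_perm _).trans ?_
      show ((bsort l).leaves ++ (bsort r).reverse.leaves).Perm _
      rw [BTree.reverse_leaves]
      exact List.Perm.append (ih l) (((bsort r).leaves.reverse_perm).trans (ih r))

/-- Map a function over the leaves of a tree. -/
def tmap {A B : Type*} (f : A → B) : ∀ {n : ℕ}, BTree A n → BTree B n
  | _, .L x => .L (f x)
  | _, .N l r => .N (tmap f l) (tmap f r)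

theorem tmap_leaves {A B : Type*} (f : A → B) :
    ∀ {n : ℕ} (t : BTree A n), (tmap f t).leaves = t.leaves.map f
  | _, .L x => rfl
  | _, .N l r => by
    simp [tmap, BTree.leaves, tmap_leaves f l, tmap_leaves f r]

theorem tmap_reverse {A B : Type*} (f : A → B) :
    ∀ {n : ℕ} (t : BTree A n), tmap f t.reverse = (tmap f t).reverse
  | _, .L x => rfl
  | _, .N l r => by
    simp [tmap, BTree.reverse, tmap_reverse f l, tmap_reverse f r]

section MapComm

variable {α β : Type*} [LinearOrder α] [LinearOrder β] {f : α → β}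

theorem minMaxSwap_tmap (hf : Monotone f) : ∀ {n : ℕ} (l r : BTree α n),
    minMaxSwap (tmap f l) (tmap f r) =
      (tmap f (minMaxSwap l r).1, tmap f (minMaxSwap l r).2)
  | _, .L x, .L y => by
    simp [minMaxSwap, tmap, hf.map_min, hf.map_max]
  | _, .N l₁ r₁, .N l₂ r₂ => by
    have h₁ := minMaxSwap_tmap hf l₁ l₂
    have h₂ := minMaxSwap_tmap hf r₁ r₂
    show minMaxSwap (.N (tmap f l₁) (tmap f r₁)) (.N (tmap f l₂) (tmap f r₂)) = _
    rw [minMaxSwap_N, minMaxSwap_N, h₁, h₂]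
    rfl

theorem bmerge_tmap (hf : Monotone f) {n : ℕ} (t : BTree α n) : bmerge (tmap f t) = tmap f (bmerge t) := by
  induction n with
  | zero => cases t with | L x => rfl
  | succ n ih =>
    cases t with
    | N l r =>
      show bmerge (.N (tmap f l) (tmap f r)) = _
      rw [bmerge_N, minMaxSwap_tmap hf, bmerge_N]
      simp only []
      rw [ih, ih]
      rfl

theorem bsort_tmap (hf : Monotone f) {n : ℕ} (t : BTree α n) : bsort (tmap f t) = tmap f (bsort t) := by
  induction n with
  | zero => cases t with | L x => rfl
  | succ n ih =>
    cases t with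
    | N l r =>
      show bmerge (.N (bsort (tmap f l)) (bsort (tmap f r)).reverse) = _
      rw [ih, ih, ← tmap_reverse]
      rw [show (BTree.N (tmap f (bsort l)) (tmap f (bsort r).reverse)) =
            tmap f (.N (bsort l) (bsort r).reverse) from rfl]
      rw [bmerge_tmap hf]
      rfl

end MapComm

end Aux

section Bool01

/-- The set of `true` positions is convex (ascending-then-descending 0-1 pattern). -/
def Conv (L : List Bool) : Prop :=
  ∀ i j k : ℕ, i ≤ j → j ≤ k →
    L.getD i false = true → L.getD k false = true → L.getD j false = true

/-- The set of `false` positions is convex. -/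
def ConvF (L : List Bool) : Prop :=
  ∀ i j k : ℕ, i ≤ j → j ≤ k → k < L.length →
    L.getD i false = false → L.getD k false = false → L.getD j false = false

theorem getD_true_lt {L : List Bool} {i : ℕ} (h : L.getD i false = true) : i < L.length := by
  by_contra hi
  rw [List.getD_eq_default _ _ (le_of_not_gt hi)] at h
  exact Bool.false_ne_true h

theorem half_lemma {l r : List Bool} (hlen : l.length = r.length)
    (hb : Conv (l ++ r) ∨ ConvF (l ++ r)) :
    (Conv (List.zipWith min l r) ∨ ConvF (List.zipWith min l r)) ∧
    (Conv (List.zipWith max l r) ∨ ConvF (List.zipWith max l r)) ∧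
    (∀ u ∈ List.zipWith min l r, ∀ v ∈ List.zipWith max l r, u ≤ v) := by
  set m := l.length with hm
  set Q : ℕ → Bool := fun i => (l ++ r).getD i false with hQ
  have hlenL : (l ++ r).length = m + m := by simp [List.length_append, ← hlen]; rfl
  have hQoob : ∀ i, m + m ≤ i → Q i = false := by
    intro i hi
    exact List.getD_eq_default _ _ (by omega)
  have hQlt : ∀ {i}, Q i = true → i < m + m := by
    intro i h
    have := getD_true_lt h
    omega
  have hxlen : (List.zipWith min l r).length = m := by
    simp [List.length_zipWith, ← hlen]; exact le_rfl
  have hylen : (List.zipWith max l r).length = m := by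
    simp [List.length_zipWith, ← hlen]; exact le_rfl
  have hQl : ∀ i, i < m → Q i = l.getD i false := fun i hi => List.getD_append _ _ _ _ hi
  have hQr : ∀ i, i < m → Q (m + i) = r.getD i false := by
    intro i hi
    show (l ++ r).getD (m + i) false = _
    rw [List.getD_append_right _ _ _ _ (by omega)]
    congr 1
    omega
  have hX : ∀ i, (List.zipWith min l r).getD i false = (Q i && Q (m + i)) := by
    intro i
    by_cases hi : i < m
    · rw [List.getD_eq_getElem _ _ (by omega), List.getElem_zipWith,
        hQl i hi, hQr i hi, List.getD_eq_getElem _ _ hi,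
        List.getD_eq_getElem _ _ (by omega)]
      cases l[i] <;> cases r[i] <;> rfl
    · rw [List.getD_eq_default _ _ (by omega), hQoob (m + i) (by omega), Bool.and_false]
  have hY : ∀ i, i < m → (List.zipWith max l r).getD i false = (Q i || Q (m + i)) := by
    intro i hi
    rw [List.getD_eq_getElem _ _ (by omega), List.getElem_zipWith,
      hQl i hi, hQr i hi, List.getD_eq_getElem _ _ hi,
      List.getD_eq_getElem _ _ (by omega)]
    cases l[i] <;> cases r[i] <;> rfl
  replace hb : (∀ i j k : ℕ, i ≤ j → j ≤ k → Q i = true → Q k = true → Q j = true) ∨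
      (∀ i j k : ℕ, i ≤ j → j ≤ k → k < m + m → Q i = false → Q k = false → Q j = false) := by
    rcases hb with hC | hF
    · exact Or.inl hC
    · exact Or.inr fun i j k h1 h2 hk => hF i j k h1 h2 (by omega)
  -- the cross comparison
  have cross : ∀ i j, j < m → (List.zipWith min l r).getD i false = true →
      (List.zipWith max l r).getD j false = true := by
    intro i j hjm hxi
    rw [hX] at hxi
    obtain ⟨hQi, hQmi⟩ := Bool.and_eq_true_iff.mp hxi
    have him : i < m := by have := hQlt hQmi; omega
    rw [hY j hjm]
    by_contra hor
    have h1 : Q j = false := by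
      cases h : Q j
      · rfl
      · rw [h] at hor; simp at hor
    have h2 : Q (m + j) = false := by
      cases h : Q (m + j)
      · rfl
      · rw [h] at hor; simp at hor
    rw [h1, h2] at hor
    rcases hb with hC | hF
    · rcases le_total i j with hij | hji
      · have := hC i j (m + i) hij (by omega) hQi hQmi
        rw [h1] at this; exact Bool.false_ne_true this
      · have := hC i (m + j) (m + i) (by omega) (by omega) hQi hQmi
        rw [h2] at this; exact Bool.false_ne_true this
    · rcases le_total i j with hij | hji
      · have := hF j (m + i) (m + j) (by omega) (by omega) (by omega) h1 h2
        rw [hQmi] at this; exact (by decide : true ≠ false) this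
      · have := hF j i (m + j) hji (by omega) (by omega) h1 h2
        rw [hQi] at this; exact (by decide : true ≠ false) this
  refine ⟨?_, ?_, ?_⟩
  · -- bitonicity of the min half
    rcases hb with hC | hF
    · left
      intro i j k hij hjk hxi hxk
      rw [hX] at hxi hxk ⊢
      obtain ⟨hQi, hQmi⟩ := Bool.and_eq_true_iff.mp hxi
      obtain ⟨hQk, hQmk⟩ := Bool.and_eq_true_iff.mp hxk
      rw [hC i j k hij hjk hQi hQk,
        hC (m + i) (m + j) (m + k) (by omega) (by omega) hQmi hQmk]
      rfl
    · by_cases hcx : Conv (List.zipWith min l r)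
      · exact Or.inl hcx
      · right
        unfold Conv at hcx
        push_neg at hcx
        obtain ⟨i₀, j₀, k₀, h01, h02, hxi₀, hxk₀, hxj₀⟩ := hcx
        rw [hX] at hxi₀ hxk₀ hxj₀
        obtain ⟨hQi₀, hQmi₀⟩ := Bool.and_eq_true_iff.mp hxi₀
        obtain ⟨hQk₀, hQmk₀⟩ := Bool.and_eq_true_iff.mp hxk₀
        have hi₀m : i₀ < m := by have := hQlt hQmi₀; omega
        have hk₀m : k₀ < m := by have := hQlt hQmk₀; omega
        intro i j k hij hjk hkx hxi hxk
        rw [hxlen] at hkx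
        rw [hX] at hxi hxk ⊢
        by_contra hj
        have hj' : (Q j && Q (m + j)) = true := by
          cases h : (Q j && Q (m + j))
          · exact absurd h hj
          · rfl
        obtain ⟨hQj, hQmj⟩ := Bool.and_eq_true_iff.mp hj'
        have hdisj : ∀ {p : ℕ}, (Q p && Q (m + p)) = false →
            Q p = false ∨ Q (m + p) = false := by
          intro p hp
          cases h : Q p
          · exact Or.inl rfl
          · cases h' : Q (m + p)
            · exact Or.inr rfl
            · rw [h, h'] at hp; simp at hp
        rcases hdisj hxi with hQi | hQmi <;> rcases hdisj hxk with hQk | hQmk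
        · have := hF i j k hij hjk (by omega) hQi hQk
          rw [hQj] at this; exact (by decide : true ≠ false) this
        · have := hF i j (m + k) hij (by omega) (by omega) hQi hQmk
          rw [hQj] at this; exact (by decide : true ≠ false) this
        · -- the hard case: Q (m+i) = false, Q k = false; use the witness
          have hwit : Q j₀ = false ∨ Q (m + j₀) = false := by
            cases h : Q j₀
            · exact Or.inl rfl
            · cases h' : Q (m + j₀)
              · exact Or.inr rfl
              · exfalso; apply hxj₀; rw [h, h']; rfl
          rcases hwit with hw | hw
          · have := hF j₀ k₀ (m + i) h02 (by omega) (by omega) hw hQmi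
            rw [hQk₀] at this; exact (by decide : true ≠ false) this
          · have := hF k (m + i₀) (m + j₀) (by omega) (by omega) (by omega) hQk hw
            rw [hQmi₀] at this; exact (by decide : true ≠ false) this
        · have := hF (m + i) (m + j) (m + k) (by omega) (by omega) (by omega) hQmi hQmk
          rw [hQmj] at this; exact (by decide : true ≠ false) this
  · -- bitonicity of the max half
    rcases hb with hC | hF
    · by_cases hfy : ConvF (List.zipWith max l r)
      · exact Or.inr hfy
      · left
        unfold ConvF at hfy
        push_neg at hfy
        obtain ⟨i₀, j₀, k₀, h01, h02, hk₀, hyi₀, hyk₀, hyj₀⟩ := hfy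
        rw [hylen] at hk₀
        have hi₀m : i₀ < m := by omega
        have hj₀m : j₀ < m := by omega
        rw [hY i₀ hi₀m, hY j₀ hj₀m, hY k₀ hk₀] at *
        have hyj₀' : (Q j₀ || Q (m + j₀)) = true := by
          cases h : (Q j₀ || Q (m + j₀))
          · exact absurd h hyj₀
          · rfl
        have hdisjF : ∀ {p : ℕ}, (Q p || Q (m + p)) = false →
            Q p = false ∧ Q (m + p) = false := by
          intro p hp
          constructor
          · cases h : Q p
            · rfl
            · rw [h] at hp; simp at hp
          · cases h : Q (m + p)
            · rfl
            · rw [h] at hp; simp at hp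
        obtain ⟨hQi₀, hQmi₀⟩ := hdisjF hyi₀
        obtain ⟨hQk₀, hQmk₀⟩ := hdisjF hyk₀
        intro i j k hij hjk hyi hyk
        have hkm : k < m := by
          have := getD_true_lt hyk
          rw [hylen] at this
          exact this
        have him : i < m := by omega
        have hjm : j < m := by omega
        rw [hY i him] at hyi
        rw [hY k hkm] at hyk
        rw [hY j hjm]
        by_contra hyj
        obtain ⟨hQj, hQmj⟩ := hdisjF (show (Q j || Q (m + j)) = false by
          cases h : (Q j || Q (m + j))
          · rfl
          · exact absurd h hyj)
        rcases Bool.or_eq_true_iff.mp hyi with hQi | hQmi <;>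
          rcases Bool.or_eq_true_iff.mp hyk with hQk | hQmk
        · have := hC i j k hij hjk hQi hQk
          rw [hQj] at this; exact Bool.false_ne_true this
        · have := hC i j (m + k) hij (by omega) hQi hQmk
          rw [hQj] at this; exact Bool.false_ne_true this
        · -- hard case: Q (m+i) = true, Q k = true; use the witness
          rcases Bool.or_eq_true_iff.mp hyj₀' with hw | hw
          · have := hC j₀ k₀ (m + i) h02 (by omega) hw hQmi
            rw [hQk₀] at this; exact Bool.false_ne_true this
          · have := hC k (m + i₀) (m + j₀) (by omega) (by omega) hQk hw
            rw [hQmi₀] at this; exact Bool.false_ne_true this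
        · have := hC (m + i) (m + j) (m + k) (by omega) (by omega) hQmi hQmk
          rw [hQmj] at this; exact Bool.false_ne_true this
    · right
      intro i j k hij hjk hky hyi hyk
      rw [hylen] at hky
      rw [hY i (by omega)] at hyi
      rw [hY k (by omega)] at hyk
      rw [hY j (by omega)]
      have hdisjF : ∀ {p : ℕ}, (Q p || Q (m + p)) = false →
          Q p = false ∧ Q (m + p) = false := by
        intro p hp
        constructor
        · cases h : Q p
          · rfl
          · rw [h] at hp; simp at hp
        · cases h : Q (m + p)
          · rfl
          · rw [h] at hp; simp at hp
      obtain ⟨hQi, hQmi⟩ := hdisjF hyi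
      obtain ⟨hQk, hQmk⟩ := hdisjF hyk
      rw [hF i j k hij hjk (by omega) hQi hQk,
        hF (m + i) (m + j) (m + k) (by omega) (by omega) (by omega) hQmi hQmk]
      rfl
  · -- every element of the min half is ≤ every element of the max half
    intro u hu v hv
    obtain ⟨i, hi, hiu⟩ := List.mem_iff_getElem.mp hu
    obtain ⟨j, hj, hjv⟩ := List.mem_iff_getElem.mp hv
    have hu' : (List.zipWith min l r).getD i false = u := by
      rw [List.getD_eq_getElem _ _ hi, hiu]
    have hv' : (List.zipWith max l r).getD j false = v := by
      rw [List.getD_eq_getElem _ _ hj, hjv]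
    intro huv
    rw [← hv']
    exact cross i j (by rw [hylen] at hj; exact hj) (by rw [hu', huv])

theorem bool_le_of_imp {a b : Bool} (h : a = true → b = true) : a ≤ b := h

theorem bool_imp_of_le {a b : Bool} (h : a ≤ b) : a = true → b = true := by
  revert h; cases a <;> cases b <;> decide

theorem conv_asc_desc {u v : List Bool} (hu : u.Pairwise (· ≤ ·)) (hv : v.Pairwise (· ≥ ·)) :
    Conv (u ++ v) := by
  intro i j k hij hjk hQi hQk
  have hk := getD_true_lt hQk
  rw [List.length_append] at hk
  by_cases hj : j < u.length
  · have hi : i < u.length := by omega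
    rw [List.getD_append _ _ _ _ hi, List.getD_eq_getElem _ _ hi] at hQi
    rw [List.getD_append _ _ _ _ hj, List.getD_eq_getElem _ _ hj]
    rcases eq_or_lt_of_le hij with rfl | hij'
    · exact hQi
    · exact bool_imp_of_le ((List.pairwise_iff_getElem.mp hu) i j hi hj hij') hQi
  · have hju : u.length ≤ j := by omega
    have hku : u.length ≤ k := by omega
    have hkv : k - u.length < v.length := by omega
    have hjv : j - u.length < v.length := by omega
    rw [List.getD_append_right _ _ _ _ hku, List.getD_eq_getElem _ _ hkv] at hQk
    rw [List.getD_append_right _ _ _ _ hju, List.getD_eq_getElem _ _ hjv]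
    rcases eq_or_lt_of_le hjk with rfl | hjk'
    · exact hQk
    · exact bool_imp_of_le
        ((List.pairwise_iff_getElem.mp hv) (j - u.length) (k - u.length) hjv hkv
          (by omega)) hQk

theorem bmerge_bool_sorted {n : ℕ} (t : BTree Bool n)
    (hb : Conv t.leaves ∨ ConvF t.leaves) : (bmerge t).leaves.Pairwise (· ≤ ·) := by
  induction n with
  | zero => cases t with | L x => simp [bmerge, BTree.leaves]
  | succ n ih =>
    cases t with
    | N l r =>
      rw [bmerge_N]
      obtain ⟨h1, h2⟩ := minMaxSwap_leaves l r
      have hlen : l.leaves.length = r.leaves.length := by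
        rw [BTree.leaves_length, BTree.leaves_length]
      have hb' : Conv (l.leaves ++ r.leaves) ∨ ConvF (l.leaves ++ r.leaves) := hb
      obtain ⟨hx, hy, hxy⟩ := half_lemma hlen hb'
      show ((bmerge _).leaves ++ (bmerge _).leaves).Pairwise (· ≤ ·)
      rw [List.pairwise_append]
      refine ⟨ih _ (by rw [h1]; exact hx), ih _ (by rw [h2]; exact hy), ?_⟩
      intro a ha b hb2
      have ha' : a ∈ List.zipWith min l.leaves r.leaves := by
        rw [← h1]; exact (bmerge_perm _).mem_iff.mp ha
      have hb2' : b ∈ List.zipWith max l.leaves r.leaves := by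
        rw [← h2]; exact (bmerge_perm _).mem_iff.mp hb2
      exact hxy a ha' b hb2'

theorem bsort_bool_sorted {n : ℕ} (t : BTree Bool n) : (bsort t).leaves.Pairwise (· ≤ ·) := by
  induction n with
  | zero => cases t with | L x => simp [bsort, BTree.leaves]
  | succ n ih =>
    cases t with
    | N l r =>
      show (bmerge (.N (bsort l) (bsort r).reverse)).leaves.Pairwise (· ≤ ·)
      apply bmerge_bool_sorted
      left
      show Conv ((bsort l).leaves ++ (bsort r).reverse.leaves)
      rw [BTree.reverse_leaves]
      apply conv_asc_desc (ih l)
      rw [List.pairwise_reverse]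
      exact ih r

end Bool01

/-- Bitonic sorter correctness: for any input of length `2^n` over a linear
order, the output is a sorted permutation of the input. -/
theorem bsort_correct {α : Type*} [LinearOrder α] {n : ℕ} (t : BTree α n) :
    (bsort t).leaves.Pairwise (· ≤ ·) ∧ (bsort t).leaves.Perm t.leaves := by
  refine ⟨?_, bsort_perm t⟩
  by_contra hs
  rw [List.pairwise_iff_getElem] at hs
  push_neg at hs
  obtain ⟨i, j, hi, hj, hij, hgt⟩ := hs
  have hlt : (bsort t).leaves[j] < (bsort t).leaves[i] := hgt
  set g : α → Bool := fun x => decide ((bsort t).leaves[j] < x) with hg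
  have hmono : Monotone g := by
    intro a b hab
    apply bool_le_of_imp
    intro h
    rw [hg] at h ⊢
    exact decide_eq_true (lt_of_lt_of_le (of_decide_eq_true h) hab)
  have hsorted := bsort_bool_sorted (tmap g t)
  rw [bsort_tmap hmono, tmap_leaves] at hsorted
  rw [List.pairwise_iff_getElem] at hsorted
  have hle := hsorted i j (by simpa using hi) (by simpa using hj) hij
  rw [List.getElem_map, List.getElem_map] at hle
  have h1 : g ((bsort t).leaves[i]) = true := decide_eq_true hlt
  have h2 : g ((bsort t).leaves[j]) = false := decide_eq_false (lt_irrefl _)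
  rw [h1, h2] at hle
  exact (by decide : ¬ (true ≤ false)) hle
end
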